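/- Let Q be a real symmetric traceless 3×3 matrix. Then 6 (tr(Q³))² ≤ (tr(Q²))³. Equivalently, for Q ≠ 0 the biaxiality parameter β = 1 − 6 (tr(Q³))² / (tr(Q²))³ satisfies 0 ≤ β ≤ 1. -/

import Mathlib

/-! The eigenvalues `x, y, z` of `Q` sum to zero, and `tr Q² = x² + y² + z²`, `tr Q³ = x³ + y³ + z³`.
For `x + y + z = 0`, the quantity `(x² + y² + z²)³ - 6 (x³ + y³ + z³)²` is twice the discriminant
`((x - y)(y - z)(z - x))²` of the characteristic polynomial, hence nonnegative. -/

open Matrix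

theorem cube_sum_sq_sub_six_mul_sq_sum_cube {x y z : ℝ} (h : x + y + z = 0) :
    (x ^ 2 + y ^ 2 + z ^ 2) ^ 3 - 6 * (x ^ 3 + y ^ 3 + z ^ 3) ^ 2
      = 2 * ((x - y) * (y - z) * (z - x)) ^ 2 := by
  obtain rfl : z = -x - y := by linarith
  ring

theorem six_mul_sq_sum_cube_le_cube_sum_sq (x : Fin 3 → ℝ) (h : ∑ i, x i = 0) :
    6 * (∑ i, x i ^ 3) ^ 2 ≤ (∑ i, x i ^ 2) ^ 3 := by
  rw [Fin.sum_univ_three] at h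
  simp only [Fin.sum_univ_three]
  linarith [cube_sum_sq_sub_six_mul_sq_sum_cube h,
    sq_nonneg ((x 0 - x 1) * (x 1 - x 2) * (x 2 - x 0))]

theorem Matrix.IsHermitian.trace_pow_eq_sum_eigenvalues_pow {𝕜 n : Type*} [RCLike 𝕜] [Fintype n]
    [DecidableEq n] {A : Matrix n n 𝕜} (hA : A.IsHermitian) (k : ℕ) :
    (A ^ k).trace = ∑ i, (hA.eigenvalues i : 𝕜) ^ k := by
  conv_lhs => rw [hA.spectral_theorem]
  rw [← map_pow, Unitary.conjStarAlgAut_apply, trace_mul_cycle,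
    Unitary.coe_star_mul_self, one_mul, diagonal_pow, trace_diagonal]
  simp only [Pi.pow_apply, Function.comp_apply]

theorem biaxiality_parameter_bounds
    (Q : Matrix (Fin 3) (Fin 3) ℝ) (hsym : Q.IsSymm) (htr : Q.trace = 0) :
    6 * ((Q * Q * Q).trace)^2 ≤ ((Q * Q).trace)^3 ∧
    (Q ≠ 0 →
      0 ≤ 1 - 6 * ((Q * Q * Q).trace)^2 / ((Q * Q).trace)^3 ∧
      1 - 6 * ((Q * Q * Q).trace)^2 / ((Q * Q).trace)^3 ≤ 1) := by
  have hQ : Q.IsHermitian := by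
    rwa [IsHermitian, conjTranspose_eq_transpose_of_trivial]
  have htrace (k : ℕ) : (Q ^ k).trace = ∑ i, hQ.eigenvalues i ^ k := by
    simpa using hQ.trace_pow_eq_sum_eigenvalues_pow k
  have hsum : ∑ i, hQ.eigenvalues i = 0 := by simpa [htr, eq_comm] using htrace 1
  have hsq : 0 ≤ (Q * Q).trace := by
    rw [← sq, htrace]
    positivity
  have hmain : 6 * ((Q * Q * Q).trace)^2 ≤ ((Q * Q).trace)^3 := by
    rw [← sq, ← pow_succ, htrace, htrace]
    exact six_mul_sq_sum_cube_le_cube_sum_sq _ hsum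
  refine ⟨hmain, fun _ => ⟨?_, ?_⟩⟩
  · linarith [div_le_one_of_le₀ hmain (by positivity)]
  · linarith [show 0 ≤ 6 * ((Q * Q * Q).trace)^2 / ((Q * Q).trace)^3 by positivity]
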